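/- Let F₀ have finite mean, c₀ > 0, k ∈ [0, 1) with (1-k)·E_F₀[y] ≥ c₀. Then there exists a unique z_k ≥ 0 such that (1-k)·∫ (y - z_k)⁺ dF₀(y) = c₀, and the contract w(y) = (1-k)·(y - z_k)⁺ is diversion-proof (its slope never exceeds 1-k) and extracts full surplus (∫ w dF₀ = c₀). -/

import Mathlib

open MeasureTheory Filter Set Topology

/-! The stop-loss transform `z ↦ ∫ (y - z)⁺ dF₀` is 1-Lipschitz, starts at or above `E[y]` and
tends to `0`, so by the intermediate value theorem it takes the value `c₀ / (1 - k)` on `[0, ∞)`.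
It is strictly decreasing wherever it is positive, because lowering the deductible from `b` to
`a` gains `b - a` on the event `{y > b}`, which has positive mass as soon as the transform at `b`
is positive; this gives uniqueness. The contract `(1-k)(y - z)⁺` is diversion-proof since
`y ↦ (y - z)⁺` is 1-Lipschitz and nondecreasing. -/

noncomputable def stopLoss (μ : Measure ℝ) (z : ℝ) : ℝ := ∫ y, max (y - z) 0 ∂μ

section StopLoss

variable {μ : Measure ℝ}

lemma integrable_max_sub_zero [IsFiniteMeasure μ] (hμ : Integrable id μ) (z : ℝ) :
    Integrable (fun y => max (y - z) 0) μ :=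
  (hμ.sub (integrable_const z)).pos_part

lemma integral_le_stopLoss_zero [IsFiniteMeasure μ] (hμ : Integrable id μ) :
    ∫ y, y ∂μ ≤ stopLoss μ 0 :=
  integral_mono hμ (integrable_max_sub_zero hμ 0) fun y => by simp

lemma stopLoss_antitone [IsFiniteMeasure μ] (hμ : Integrable id μ) : Antitone (stopLoss μ) :=
  fun _ _ hab => integral_mono (integrable_max_sub_zero hμ _) (integrable_max_sub_zero hμ _)
    fun _ => max_le_max (by linarith) le_rfl

lemma lipschitzWith_stopLoss [IsProbabilityMeasure μ] (hμ : Integrable id μ) :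
    LipschitzWith 1 (stopLoss μ) := by
  refine LipschitzWith.of_le_add fun a b => ?_
  calc stopLoss μ a ≤ ∫ y, (max (y - b) 0 + dist a b) ∂μ := by
        refine integral_mono (integrable_max_sub_zero hμ a)
          ((integrable_max_sub_zero hμ b).add (integrable_const _)) fun y => ?_
        have h := abs_max_sub_max_le_abs (y - a) (y - b) 0
        rw [sub_sub_sub_cancel_left, abs_sub_comm b a] at h
        rw [Real.dist_eq]
        linarith [le_abs_self (max (y - a) 0 - max (y - b) 0)]
    _ = stopLoss μ b + dist a b := by
        rw [integral_add (integrable_max_sub_zero hμ b) (integrable_const _)]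
        simp [stopLoss]

lemma tendsto_stopLoss_atTop [IsFiniteMeasure μ] (hμ : Integrable id μ) :
    Tendsto (stopLoss μ) atTop (𝓝 0) := by
  have h := tendsto_integral_filter_of_dominated_convergence (μ := μ) (l := atTop)
    (F := fun z y => max (y - z) 0) (f := fun _ => 0) (fun y => |y|)
    (Eventually.of_forall fun z => (integrable_max_sub_zero hμ z).aestronglyMeasurable)
    ((eventually_ge_atTop 0).mono fun z hz => Eventually.of_forall fun y => ?_) hμ.abs
    (Eventually.of_forall fun y => tendsto_const_nhds.congr' <|
      (eventually_ge_atTop y).mono fun z hz => (max_eq_right (by linarith)).symm)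
  · rwa [integral_zero] at h
  · rw [Real.norm_eq_abs, abs_of_nonneg (le_max_right _ _)]
    exact max_le (by linarith [le_abs_self y]) (abs_nonneg y)

lemma stopLoss_eq_zero_of_ae_le {b : ℝ} (h : ∀ᵐ y ∂μ, y ≤ b) :
    stopLoss μ b = 0 :=
  integral_eq_zero_of_ae <| h.mono fun y hy => max_eq_right (by linarith)

lemma strictAntiOn_stopLoss [IsFiniteMeasure μ] (hμ : Integrable id μ) :
    StrictAntiOn (stopLoss μ) {z | 0 < stopLoss μ z} := by
  intro a _ b (hb : 0 < stopLoss μ b) hab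
  refine (stopLoss_antitone hμ hab.le).lt_of_ne fun hEq => hb.ne' ?_
  have hgap : ∫ y, (max (y - a) 0 - max (y - b) 0) ∂μ = 0 := by
    rw [integral_sub (integrable_max_sub_zero hμ a) (integrable_max_sub_zero hμ b)]
    exact sub_eq_zero.mpr hEq.symm
  have hae := (integral_eq_zero_iff_of_nonneg
    (fun y => sub_nonneg.mpr (max_le_max (by linarith) le_rfl))
    ((integrable_max_sub_zero hμ a).sub (integrable_max_sub_zero hμ b))).mp hgap
  refine stopLoss_eq_zero_of_ae_le (hae.mono fun y hy => ?_)
  by_contra! hby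
  have : max (y - a) 0 - max (y - b) 0 = b - a := by
    rw [max_eq_left (by linarith), max_eq_left (by linarith)]; ring
  simp only [Pi.zero_apply] at hy
  linarith

lemma exists_nonneg_stopLoss_eq [IsProbabilityMeasure μ] (hμ : Integrable id μ) {t : ℝ}
    (ht : t ∈ Ioc 0 (stopLoss μ 0)) : ∃ z, 0 ≤ z ∧ stopLoss μ z = t :=
  isPreconnected_Ici.intermediate_value_Ioc self_mem_Ici (le_principal_iff.mpr (Ici_mem_atTop 0))
    (lipschitzWith_stopLoss hμ).continuous.continuousOn (tendsto_stopLoss_atTop hμ) ht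

end StopLoss

lemma max_sub_zero_sub_le {x y : ℝ} (z : ℝ) (hxy : x ≤ y) :
    max (y - z) 0 - max (x - z) 0 ≤ y - x :=
  (max_sub_max_le_max _ _ _ _).trans_eq (by rw [sub_sub_sub_cancel_right, sub_self,
    max_eq_left (sub_nonneg.mpr hxy)])

theorem stmt_12_general (F₀ : Measure ℝ) [IsProbabilityMeasure F₀]
    (hInt : Integrable id F₀)
    (c₀ : ℝ) (hc₀ : 0 < c₀) (k : ℝ) (hk : k ∈ Set.Ico (0:ℝ) 1)
    (hE : c₀ ≤ (1 - k) * ∫ y, y ∂F₀) :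
    ∃ zk : ℝ, 0 ≤ zk ∧ (1 - k) * (∫ y, max (y - zk) 0 ∂F₀) = c₀ ∧
      (∀ z' : ℝ, 0 ≤ z' → (1 - k) * (∫ y, max (y - z') 0 ∂F₀) = c₀ → z' = zk) ∧
      (∀ x y : ℝ, 0 ≤ x → x ≤ y →
        (1 - k) * max (y - zk) 0 - (1 - k) * max (x - zk) 0 ≤ (1 - k) * (y - x)) ∧
      (∫ y, (1 - k) * max (y - zk) 0 ∂F₀) = c₀ := by
  have h1k : 0 < 1 - k := sub_pos.mpr hk.2
  have hsolve : ∀ z, (1 - k) * stopLoss F₀ z = c₀ ↔ stopLoss F₀ z = c₀ / (1 - k) := fun z => by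
    rw [eq_div_iff h1k.ne', mul_comm]
  have ht : c₀ / (1 - k) ∈ Ioc 0 (stopLoss F₀ 0) :=
    ⟨div_pos hc₀ h1k, (div_le_iff₀' h1k).mpr (hE.trans
      (mul_le_mul_of_nonneg_left (integral_le_stopLoss_zero hInt) h1k.le))⟩
  obtain ⟨zk, hzk0, hzk⟩ := exists_nonneg_stopLoss_eq hInt ht
  have hmain : (1 - k) * stopLoss F₀ zk = c₀ := (hsolve zk).mpr hzk
  refine ⟨zk, hzk0, hmain, fun z' _ hz' => ?_, fun x y _ hxy => ?_, ?_⟩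
  · have hpos : ∀ z, stopLoss F₀ z = c₀ / (1 - k) → 0 < stopLoss F₀ z := fun z h => h ▸ ht.1
    have hz't := (hsolve z').mp hz'
    exact (strictAntiOn_stopLoss hInt).injOn (hpos z' hz't) (hpos zk hzk) (hz't.trans hzk.symm)
  · rw [← mul_sub]
    exact mul_le_mul_of_nonneg_left (max_sub_zero_sub_le zk hxy) h1k.le
  · rw [integral_const_mul]
    exact hmain

/-- For `k ∈ [0,1)` with `(1-k)·E[y] ≥ c₀ > 0`, there is a unique `z_k ≥ 0`
with `(1-k)·∫ (y - z_k)⁺ dF₀ = c₀`, and the contract `w y = (1-k)·(y - z_k)⁺` is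
diversion-proof (slope at most `1-k`) and extracts full surplus. -/
theorem stmt_12 (F₀ : Measure ℝ) [IsProbabilityMeasure F₀]
    (hnn : ∀ᵐ y ∂F₀, 0 ≤ y) (hInt : Integrable id F₀)
    (c₀ : ℝ) (hc₀ : 0 < c₀) (k : ℝ) (hk : k ∈ Set.Ico (0:ℝ) 1)
    (hE : c₀ ≤ (1 - k) * ∫ y, y ∂F₀) :
    ∃ zk : ℝ, 0 ≤ zk ∧ (1 - k) * (∫ y, max (y - zk) 0 ∂F₀) = c₀ ∧
      (∀ z' : ℝ, 0 ≤ z' → (1 - k) * (∫ y, max (y - z') 0 ∂F₀) = c₀ → z' = zk) ∧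
      (∀ x y : ℝ, 0 ≤ x → x ≤ y →
        (1 - k) * max (y - zk) 0 - (1 - k) * max (x - zk) 0 ≤ (1 - k) * (y - x)) ∧
      (∫ y, (1 - k) * max (y - zk) 0 ∂F₀) = c₀ :=
  stmt_12_general F₀ hInt c₀ hc₀ k hk hE
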